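/- Consider the modified homogeneous game Γ(S,η) where s > 1 agents each choose a precision in {0} ∪ [η, 1/σ²] with cost J_i(λ) = c(λᵢ) + F(1/Σⱼλⱼ) (+∞ if all zero). Let λ*(s) be the symmetric equilibrium of the unrestricted game and η*(s) the unique solution of F(1/((s−1)η)) − F(1/(sη)) = c(η) (or 1/σ² if no solution). If λ*(s) < η ≤ η*(s), then the symmetric profile with λᵢ = η for all i is a Nash equilibrium: no agent gains by deviating to 0 or to any λ ∈ (η, 1/σ²]. -/

import Mathlib

open Set

/-- Cost of agent `i` in the estimation game (estimation cost `+∞` when `Σⱼλⱼ = 0`). -/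
noncomputable def gameCost (s : ℕ) (c F : ℝ → ℝ) (i : Fin s) (lam : Fin s → ℝ) : EReal :=
  (c (lam i) : EReal) + (if 0 < ∑ j, lam j then ((F (1 / ∑ j, lam j) : ℝ) : EReal) else ⊤)

/-!
Only two deviations from the symmetric profile `η` matter. Dropping out is unprofitable as long as
`g(t) = F(1/((s-1)t)) - F(1/(st)) - c(t)` is nonnegative at `η`: `g` is antitone, so this holds
below a root `η*` of `g`; without a root, `g` keeps the sign it has at `λ*`, which is nonnegative
because `λ*` is an equilibrium. Raising one's precision by `δ` costs `c(t+δ) - c(t)` and saves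
`F(1/(st)) - F(1/(st+δ))`; by convexity and monotonicity of `c` and `F` the first grows and the
second shrinks with `t`, so this deviation, unprofitable at `λ*`, is unprofitable at `η > λ*`.
-/

section ConvexIncrement

variable {S : Set ℝ} {f : ℝ → ℝ} {x y x' y' : ℝ}

lemma ConvexOn.slope_le_slope (hf : ConvexOn ℝ S f) (hx : x ∈ S) (hy' : y' ∈ S)
    (hxy : x < y) (hx'y' : x' < y') (hxx' : x ≤ x') (hyy' : y ≤ y') :
    slope f x y ≤ slope f x' y' := by
  have hy : y ∈ S := hf.1.ordConnected.out hx hy' ⟨hxy.le, hyy'⟩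
  have hx' : x' ∈ S := hf.1.ordConnected.out hx hy' ⟨hxx', hx'y'.le⟩
  calc slope f x y ≤ slope f x y' :=
        hf.slope_mono hx ⟨hy, hxy.ne'⟩ ⟨hy', (hxy.trans_le hyy').ne'⟩ hyy'
    _ = slope f y' x := slope_comm f x y'
    _ ≤ slope f y' x' :=
        hf.slope_mono hy' ⟨hx, (hxy.trans_le hyy').ne⟩ ⟨hx', hx'y'.ne⟩ hxx'
    _ = slope f x' y' := slope_comm f y' x'

lemma ConvexOn.sub_le_sub_of_monotoneOn (hf : ConvexOn ℝ S f) (hmono : MonotoneOn f S)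
    (hx : x ∈ S) (hy' : y' ∈ S) (hxy : x ≤ y) (hxx' : x ≤ x') (hyy' : y ≤ y')
    (hlen : y - x ≤ y' - x') : f y - f x ≤ f y' - f x' := by
  have hx' : x' ∈ S := hf.1.ordConnected.out hx hy' ⟨hxx', by linarith⟩
  rcases hxy.eq_or_lt with rfl | hxy
  · simpa using hmono hx' hy' (by linarith)
  have hx'y' : x' < y' := by linarith
  have hslope_nonneg : 0 ≤ slope f x' y' := by
    rw [slope_def_field]
    exact div_nonneg (sub_nonneg.2 (hmono hx' hy' hx'y'.le)) (sub_nonneg.2 hx'y'.le)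
  calc f y - f x = (y - x) * slope f x y := (sub_smul_slope f x y).symm
    _ ≤ (y - x) * slope f x' y' :=
        mul_le_mul_of_nonneg_left (hf.slope_le_slope hx hy' hxy hx'y' hxx' hyy') (by linarith)
    _ ≤ (y' - x') * slope f x' y' := by gcongr
    _ = f y' - f x' := sub_smul_slope f x' y'

end ConvexIncrement

lemma one_div_sub_one_div_add_le {t t' δ : ℝ} (ht : 0 < t) (htt' : t ≤ t') (hδ : 0 ≤ δ) :
    1 / t' - 1 / (t' + δ) ≤ 1 / t - 1 / (t + δ) := by
  have key : ∀ u, 0 < u → 1 / u - 1 / (u + δ) = δ / (u * (u + δ)) := fun u hu => by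
    field_simp
    ring
  have ht' : 0 < t' := ht.trans_le htt'
  rw [key t' ht', key t ht]
  gcongr

lemma ContinuousOn.nonneg_of_forall_ne_zero {f : ℝ → ℝ} {a b : ℝ}
    (hf : ContinuousOn f (Icc a b)) (hab : a ≤ b) (ha : 0 ≤ f a)
    (hne : ∀ t ∈ Icc a b, f t ≠ 0) : 0 ≤ f b := by
  by_contra! hb
  obtain ⟨t, ht, hft⟩ := intermediate_value_Icc' hab hf ⟨hb.le, ha⟩
  exact hne t ht hft

section Game

variable {s : ℕ} {c F : ℝ → ℝ}

noncomputable def deviationCost (s : ℕ) (c F : ℝ → ℝ) (a μ : ℝ) : ℝ :=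
  c μ + F (1 / (μ + ((s : ℝ) - 1) * a))

def IsSymmetricNashEquilibrium (s : ℕ) (c F : ℝ → ℝ) (S : Set ℝ) (a : ℝ) : Prop :=
  ∀ i : Fin s, ∀ μ ∈ S,
    gameCost s c F i (fun _ => a) ≤ gameCost s c F i (Function.update (fun _ => a) i μ)

lemma sum_update_const (i : Fin s) (a μ : ℝ) :
    ∑ j, Function.update (fun _ : Fin s => a) i μ j = μ + ((s : ℝ) - 1) * a := by
  rw [Finset.sum_update_of_mem (Finset.mem_univ i), Finset.sum_const, ← Finset.erase_eq,
    Finset.card_erase_of_mem (Finset.mem_univ i), Finset.card_univ, Fintype.card_fin,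
    nsmul_eq_mul, Nat.cast_sub i.pos, Nat.cast_one]

lemma gameCost_update_const (i : Fin s) {a μ : ℝ} (h : 0 < μ + ((s : ℝ) - 1) * a) :
    gameCost s c F i (Function.update (fun _ => a) i μ) = deviationCost s c F a μ := by
  rw [gameCost, sum_update_const, if_pos h, Function.update_self, deviationCost, EReal.coe_add]

lemma gameCost_const (i : Fin s) {a : ℝ} (ha : 0 < a) :
    gameCost s c F i (fun _ => a) = deviationCost s c F a a := by
  have hs : (1 : ℝ) ≤ s := by exact_mod_cast i.pos
  rw [← gameCost_update_const i (by nlinarith), Function.update_eq_self]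

lemma gameCost_const_zero (i : Fin s) : gameCost s c F i (fun _ => 0) = ⊤ := by
  simp [gameCost]

lemma IsSymmetricNashEquilibrium.pos {S : Set ℝ} {a μ : ℝ}
    (h : IsSymmetricNashEquilibrium s c F S a) (hs : 0 < s) (ha : 0 ≤ a) (hμ : μ ∈ S)
    (hμ0 : 0 < μ) : 0 < a := by
  refine ha.lt_of_ne fun ha0 => ?_
  subst ha0
  have hdev := h ⟨0, hs⟩ μ hμ
  rw [gameCost_const_zero, gameCost_update_const _ (by simpa using hμ0)] at hdev
  exact EReal.coe_ne_top _ (top_le_iff.1 hdev)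

lemma isSymmetricNashEquilibrium_iff {S : Set ℝ} {a : ℝ} (hs : 1 < s) (ha : 0 < a)
    (hS : S ⊆ Ici 0) :
    IsSymmetricNashEquilibrium s c F S a ↔
      ∀ μ ∈ S, deviationCost s c F a a ≤ deviationCost s c F a μ := by
  have hs' : (1 : ℝ) < s := by exact_mod_cast hs
  have key : ∀ i : Fin s, ∀ μ ∈ S, gameCost s c F i (fun _ => a)
      ≤ gameCost s c F i (Function.update (fun _ => a) i μ) ↔
        deviationCost s c F a a ≤ deviationCost s c F a μ := fun i μ hμ => by
    have hμ0 : (0 : ℝ) ≤ μ := hS hμ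
    rw [gameCost_const i ha, gameCost_update_const i (by nlinarith), EReal.coe_le_coe_iff]
  exact ⟨fun h μ hμ => (key ⟨0, by omega⟩ μ hμ).1 (h _ μ hμ),
    fun h i μ hμ => (key i μ hμ).2 (h μ hμ)⟩

/-- The function `g` above: the loss of an agent who drops out of the symmetric profile `t`. -/
noncomputable def dropoutPenalty (s : ℕ) (c F : ℝ → ℝ) (t : ℝ) : ℝ :=
  F (1 / (((s : ℝ) - 1) * t)) - F (1 / ((s : ℝ) * t)) - c t

lemma deviationCost_zero_sub_self (hc0 : c 0 = 0) (a : ℝ) :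
    deviationCost s c F a 0 - deviationCost s c F a a = dropoutPenalty s c F a := by
  rw [deviationCost, deviationCost, dropoutPenalty, hc0, zero_add, zero_add,
    show a + ((s : ℝ) - 1) * a = s * a by ring]
  ring

lemma antitoneOn_dropoutPenalty {T : Set ℝ} (hs : 1 < s) (hF : ConvexOn ℝ (Ioi 0) F)
    (hFm : MonotoneOn F (Ioi 0)) (hcm : MonotoneOn c T) (hT : T ⊆ Ioi 0) :
    AntitoneOn (dropoutPenalty s c F) T := by
  intro t ht t' ht' htt'
  have hs1 : (0 : ℝ) < s - 1 := by
    have : (1 : ℝ) < s := by exact_mod_cast hs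
    linarith
  have h0 : (0 : ℝ) < t := hT ht
  have h0' : (0 : ℝ) < t' := hT ht'
  have hgap : F (1 / (((s : ℝ) - 1) * t')) - F (1 / ((s : ℝ) * t'))
      ≤ F (1 / (((s : ℝ) - 1) * t)) - F (1 / ((s : ℝ) * t)) := by
    have key : ∀ u, 0 < u → 1 / (((s : ℝ) - 1) * u) - 1 / ((s : ℝ) * u)
        = 1 / ((s : ℝ) * ((s : ℝ) - 1) * u) := fun u hu => by
      field_simp
      ring
    refine hF.sub_le_sub_of_monotoneOn hFm (mem_Ioi.2 (by positivity))
      (mem_Ioi.2 (by positivity)) (by gcongr; linarith) (by gcongr) (by gcongr) ?_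
    rw [key t' h0', key t h0]
    gcongr
  simp only [dropoutPenalty]
  linarith [hcm ht ht' htt']

lemma continuousOn_dropoutPenalty {T : Set ℝ} (hs : 1 < s) (hF : ContinuousOn F (Ioi 0))
    (hc : ContinuousOn c T) (hT : T ⊆ Ioi 0) : ContinuousOn (dropoutPenalty s c F) T := by
  have hs' : (1 : ℝ) < s := by exact_mod_cast hs
  have hcomp : ∀ k : ℝ, 0 < k → ContinuousOn (fun t => F (1 / (k * t))) T := fun k hk =>
    hF.comp (continuousOn_const.div (by fun_prop) fun t ht => (mul_pos hk (hT ht)).ne')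
      fun t ht => one_div_pos.2 (mul_pos hk (hT ht))
  exact ((hcomp _ (by linarith)).sub (hcomp _ (by linarith))).sub hc

lemma deviationCost_self_le_add_of_le {T : Set ℝ} (hs : 0 < s) (hc : ConvexOn ℝ T c)
    (hcm : MonotoneOn c T) (hF : ConvexOn ℝ (Ioi 0) F) (hFm : MonotoneOn F (Ioi 0))
    {a a' δ : ℝ} (ha : 0 < a) (haa' : a ≤ a') (hδ : 0 ≤ δ) (haT : a ∈ T) (haT' : a' + δ ∈ T)
    (h : deviationCost s c F a a ≤ deviationCost s c F a (a + δ)) :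
    deviationCost s c F a' a' ≤ deviationCost s c F a' (a' + δ) := by
  have hs' : (0 : ℝ) < s := by exact_mod_cast hs
  have ha' : 0 < a' := ha.trans_le haa'
  have hform : ∀ t, deviationCost s c F t t = c t + F (1 / (s * t)) ∧
      deviationCost s c F t (t + δ) = c (t + δ) + F (1 / (s * t + δ)) := fun t =>
    ⟨by rw [deviationCost]; ring_nf, by rw [deviationCost]; ring_nf⟩
  rw [(hform a).1, (hform a).2] at h
  rw [(hform a').1, (hform a').2]
  have hc_inc : c (a + δ) - c a ≤ c (a' + δ) - c a' :=
    hc.sub_le_sub_of_monotoneOn hcm haT haT' (by linarith) haa' (by linarith) (by linarith)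
  have hF_inc :
      F (1 / (s * a')) - F (1 / (s * a' + δ)) ≤ F (1 / (s * a)) - F (1 / (s * a + δ)) :=
    hF.sub_le_sub_of_monotoneOn hFm (mem_Ioi.2 (by positivity)) (mem_Ioi.2 (by positivity))
      (one_div_le_one_div_of_le (by positivity) (by linarith)) (by gcongr) (by gcongr)
      (one_div_sub_one_div_add_le (by positivity) (by gcongr) hδ)
  linarith

end Game

theorem min_precision_symmetric_NE_general
    (σ2 : ℝ) (s : ℕ) (hs : 1 < s) (c F : ℝ → ℝ)
    (hc_smooth : ContDiffOn ℝ 2 c (Icc 0 (1 / σ2)))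
    (hc_mono : MonotoneOn c (Icc 0 (1 / σ2)))
    (hc_sconv : StrictConvexOn ℝ (Icc 0 (1 / σ2)) c)
    (hc0 : c 0 = 0)
    (hF_smooth : ContDiffOn ℝ 2 F (Ioi 0))
    (hF_mono : MonotoneOn F (Ioi 0))
    (hF_sconv : StrictConvexOn ℝ (Ioi 0) F)
    -- `λ*(s)`: symmetric Nash equilibrium value of the unrestricted game
    (lamstar : ℝ) (hlamstar_mem : lamstar ∈ Icc 0 (1 / σ2))
    (hlamstar_NE : ∀ i : Fin s, ∀ μ ∈ Icc 0 (1 / σ2),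
      gameCost s c F i (fun _ => lamstar)
        ≤ gameCost s c F i (Function.update (fun _ => lamstar) i μ))
    -- `η*(s)`: unique solution of the indifference equation, or `1/σ²` if none exists
    (etastar : ℝ) (hetastar_mem : etastar ∈ Ioc 0 (1 / σ2))
    (hetastar : F (1 / (((s : ℝ) - 1) * etastar)) - F (1 / ((s : ℝ) * etastar)) = c etastar
      ∨ (etastar = 1 / σ2 ∧ ∀ η ∈ Ioc 0 (1 / σ2),
          F (1 / (((s : ℝ) - 1) * η)) - F (1 / ((s : ℝ) * η)) ≠ c η))
    (η : ℝ) (hη : lamstar < η) (hη' : η ≤ etastar) :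
    ∀ i : Fin s, ∀ μ ∈ ({0} : Set ℝ) ∪ Icc η (1 / σ2),
      gameCost s c F i (fun _ => η)
        ≤ gameCost s c F i (Function.update (fun _ => η) i μ) := by
  have hη0 : 0 < η := hlamstar_mem.1.trans_lt hη
  have hηb : η ≤ 1 / σ2 := hη'.trans hetastar_mem.2
  have hlam0 : 0 < lamstar :=
    IsSymmetricNashEquilibrium.pos hlamstar_NE (by omega) hlamstar_mem.1 ⟨hη0.le, hηb⟩ hη0
  have hlamNE := (isSymmetricNashEquilibrium_iff hs hlam0 fun _ h => h.1).1 hlamstar_NE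
  have hpen : 0 ≤ dropoutPenalty s c F η := by
    rcases hetastar with hroot | ⟨-, hnoroot⟩
    · calc 0 = dropoutPenalty s c F etastar := by rw [dropoutPenalty, hroot, sub_self]
        _ ≤ dropoutPenalty s c F η :=
          antitoneOn_dropoutPenalty hs hF_sconv.convexOn hF_mono
            (hc_mono.mono Ioc_subset_Icc_self) (fun _ h => h.1) ⟨hη0, hηb⟩ hetastar_mem hη'
    · have hsub : Icc lamstar η ⊆ Ioc 0 (1 / σ2) := fun t ht =>
        ⟨hlam0.trans_le ht.1, ht.2.trans hηb⟩
      refine (continuousOn_dropoutPenalty hs hF_smooth.continuousOn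
        (hc_smooth.continuousOn.mono (hsub.trans Ioc_subset_Icc_self)) fun _ h => (hsub h).1
        ).nonneg_of_forall_ne_zero hη.le ?_ fun t ht => sub_ne_zero.2 (hnoroot t (hsub ht))
      rw [← deviationCost_zero_sub_self hc0, sub_nonneg]
      exact hlamNE 0 ⟨le_rfl, hlamstar_mem.1.trans hlamstar_mem.2⟩
  refine (isSymmetricNashEquilibrium_iff (S := {0} ∪ Icc η (1 / σ2)) hs hη0 ?_).2 ?_
  · rintro μ (rfl | hμ)
    exacts [self_mem_Ici, hη0.le.trans hμ.1]
  rintro μ (rfl | hμ)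
  · rwa [← sub_nonneg, deviationCost_zero_sub_self hc0]
  · obtain ⟨δ, hδ, rfl⟩ : ∃ δ, 0 ≤ δ ∧ μ = η + δ := ⟨μ - η, by linarith [hμ.1], by ring⟩
    exact deviationCost_self_le_add_of_le (by omega) hc_sconv.convexOn hc_mono hF_sconv.convexOn
      hF_mono hlam0 hη.le hδ ⟨hlam0.le, hlamstar_mem.2⟩ ⟨by linarith, hμ.2⟩
      (hlamNE (lamstar + δ) ⟨by linarith, by linarith [hμ.2]⟩)

/-- in the modified homogeneous game `Γ(S,η)` with `s > 1` agents whose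
strategy set is `{0} ∪ [η, 1/σ²]`, if `λ*(s) < η ≤ η*(s)` — where `λ*(s)` is the
symmetric equilibrium value of the unrestricted game and `η*(s)` is the unique solution
of `F(1/((s−1)η)) − F(1/(sη)) = c(η)` (or `1/σ²` if there is no solution) — then the
symmetric profile with `λᵢ = η` for all `i` is a Nash equilibrium: no agent gains by
deviating to `0` or to any `λ ∈ (η, 1/σ²]`. -/
theorem min_precision_symmetric_NE
    (σ2 : ℝ) (hσ2 : 0 < σ2) (s : ℕ) (hs : 1 < s) (c F : ℝ → ℝ)
    (hc_smooth : ContDiffOn ℝ 2 c (Icc 0 (1 / σ2)))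
    (hc_nonneg : ∀ x ∈ Icc 0 (1 / σ2), 0 ≤ c x)
    (hc_mono : MonotoneOn c (Icc 0 (1 / σ2)))
    (hc_sconv : StrictConvexOn ℝ (Icc 0 (1 / σ2)) c)
    (hc0 : c 0 = 0) (hc'0 : deriv c 0 = 0)
    (hF_smooth : ContDiffOn ℝ 2 F (Ioi 0))
    (hF_nonneg : ∀ x ∈ Ioi 0, 0 ≤ F x)
    (hF_mono : MonotoneOn F (Ioi 0))
    (hF_sconv : StrictConvexOn ℝ (Ioi 0) F)
    -- `λ*(s)`: symmetric Nash equilibrium value of the unrestricted game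
    (lamstar : ℝ) (hlamstar_mem : lamstar ∈ Icc 0 (1 / σ2))
    (hlamstar_NE : ∀ i : Fin s, ∀ μ ∈ Icc 0 (1 / σ2),
      gameCost s c F i (fun _ => lamstar)
        ≤ gameCost s c F i (Function.update (fun _ => lamstar) i μ))
    -- `η*(s)`: unique solution of the indifference equation, or `1/σ²` if none exists
    (etastar : ℝ) (hetastar_mem : etastar ∈ Ioc 0 (1 / σ2))
    (hetastar : F (1 / (((s : ℝ) - 1) * etastar)) - F (1 / ((s : ℝ) * etastar)) = c etastar
      ∨ (etastar = 1 / σ2 ∧ ∀ η ∈ Ioc 0 (1 / σ2),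
          F (1 / (((s : ℝ) - 1) * η)) - F (1 / ((s : ℝ) * η)) ≠ c η))
    (η : ℝ) (hη : lamstar < η) (hη' : η ≤ etastar) :
    ∀ i : Fin s, ∀ μ ∈ ({0} : Set ℝ) ∪ Icc η (1 / σ2),
      gameCost s c F i (fun _ => η)
        ≤ gameCost s c F i (Function.update (fun _ => η) i μ) :=
  min_precision_symmetric_NE_general σ2 s hs c F hc_smooth hc_mono hc_sconv hc0 hF_smooth hF_mono
    hF_sconv lamstar hlamstar_mem hlamstar_NE etastar hetastar_mem hetastar η hη hη'
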